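/- arXiv:math/9909040 — 2 statements merged into one kernel-verified Lean document; each statement's English description precedes it below -/
import Mathlib

section
/- Let A be a uniform algebra on a compact Hausdorff space Ω such that the Choquet boundary Ch(A) is dense in Ω (i.e. Ω is the Shilov boundary of A). If Ch(A) is a proper subset of Ω, then A is not convexly approximating in modulus: there exists a nonnegative f ∈ C(Ω,ℝ) that does not lie in 𝒢, the uniform closure of the set of finite sums Σᵢ |gᵢ|² with gᵢ ∈ A. -/
/-!
Take `x₀ ∉ Ch(A)`. Evaluation at `x₀` is then a proper convex combination `a φ + b ψ` of
functionals in the unit ball of `A*`, not both equal to it. Both send `1` to `1`, so their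
Hahn–Banach extensions `Φ, Ψ` are states of `C(Ω, ℂ)` and `L = a Φ + b Ψ` is a state extending
evaluation at `x₀` on `A`. Since point evaluations are extreme among states, `L` is not
evaluation at `x₀`. By the Cauchy–Schwarz inequality for states, `|g(x₀)|² = |L g|² ≤ L(|g|²)`
for `g ∈ A`, hence `u(x₀) ≤ L u` on `𝓕` and on its closure `𝒢`; but a real `h` with
`L h < h(x₀)`, shifted by a constant to be nonnegative, violates this inequality.
-/

open Filter

section Preamble

variable {Ω : Type*} [TopologicalSpace Ω] [CompactSpace Ω] [T2Space Ω]

/-- The evaluation functional at a point `x`, as a continuous linear functional on a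
subspace `A` of `C(Ω, ℂ)`. -/
noncomputable def evalFunctional (A : Submodule ℂ C(Ω, ℂ)) (x : Ω) : A →L[ℂ] ℂ :=
  LinearMap.mkContinuous
    { toFun := fun a => (a : C(Ω, ℂ)) x
      map_add' := fun a b => rfl
      map_smul' := fun c a => rfl } 1
    (fun a => by rw [one_mul]; exact (a : C(Ω, ℂ)).norm_coe_le_norm x)

/-- `x` is in the Choquet boundary of the subspace `A ⊆ C(Ω, ℂ)` iff the evaluation
functional at `x` is an extreme point of the closed unit ball of the dual space `A*`. -/
def InChoquet (A : Submodule ℂ C(Ω, ℂ)) (x : Ω) : Prop :=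
  evalFunctional A x ∈ Set.extremePoints ℝ (Metric.closedBall (0 : A →L[ℂ] ℂ) 1)

/-- A real-valued continuous function, viewed as a complex-valued continuous function. -/
noncomputable def ofRealCM (f : C(Ω, ℝ)) : C(Ω, ℂ) :=
  ⟨fun x => (f x : ℂ), Complex.continuous_ofReal.comp f.continuous⟩

/-- The submodule `A·f = {a·f : a ∈ A}` of `C(Ω, ℂ)`. -/
noncomputable def moduleAf (A : Subalgebra ℂ C(Ω, ℂ)) (f : C(Ω, ℝ)) : Submodule ℂ C(Ω, ℂ) :=
  (Subalgebra.toSubmodule A).map (LinearMap.mulRight ℂ (ofRealCM f))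

/-- A map `S` between two `A`-submodules `X, Y` of `C(Ω, ℂ)` is an `A`-module map if
`S(a·x) = a·S(x)` for all `a ∈ A`, `x ∈ X`. -/
def IsModuleMapOn (A : Subalgebra ℂ C(Ω, ℂ)) {X Y : Submodule ℂ C(Ω, ℂ)} (S : X → Y) : Prop :=
  ∀ (a : C(Ω, ℂ)), a ∈ A → ∀ (x : X) (h : a * (x : C(Ω, ℂ)) ∈ X),
    ((S ⟨a * (x : C(Ω, ℂ)), h⟩ : C(Ω, ℂ))) = a * ((S x : C(Ω, ℂ)))

/-- There is a surjective linear isometry from `X` onto `Y`. -/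
def ExistsLinearIsometry (X Y : Submodule ℂ C(Ω, ℂ)) : Prop :=
  ∃ S : X →ₗ[ℂ] Y, Function.Surjective S ∧ ∀ x, ‖S x‖ = ‖x‖

/-- There is a surjective isometric `A`-module isomorphism from `X` onto `Y`. -/
def ExistsModuleIsometry (A : Subalgebra ℂ C(Ω, ℂ)) (X Y : Submodule ℂ C(Ω, ℂ)) : Prop :=
  ∃ S : X →ₗ[ℂ] Y, Function.Surjective S ∧ (∀ x, ‖S x‖ = ‖x‖) ∧ IsModuleMapOn A S

/-- `X` and `Y` are almost isometric: for every `ε > 0` there is a bijective bounded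
linear map `T : X → Y` with `‖T‖·‖T⁻¹‖ < 1 + ε`. -/
def AlmostIsometric (X Y : Submodule ℂ C(Ω, ℂ)) : Prop :=
  ∀ ε : ℝ, 0 < ε → ∃ T : X ≃L[ℂ] Y,
    ‖T.toContinuousLinearMap‖ * ‖T.symm.toContinuousLinearMap‖ < 1 + ε

/-- `X` and `Y` are almost `A`-isometric: for every `ε > 0` there is a bijective bounded
`A`-module map `T : X → Y` with `‖T‖·‖T⁻¹‖ < 1 + ε`. -/
def AlmostAIsometric (A : Subalgebra ℂ C(Ω, ℂ)) (X Y : Submodule ℂ C(Ω, ℂ)) : Prop :=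
  ∀ ε : ℝ, 0 < ε → ∃ T : X ≃L[ℂ] Y, IsModuleMapOn A T ∧
    ‖T.toContinuousLinearMap‖ * ‖T.symm.toContinuousLinearMap‖ < 1 + ε

/-- `f ∈ Q`: `f = |g|` for an invertible element `g` of `A`. -/
def MemQ (A : Subalgebra ℂ C(Ω, ℂ)) (f : C(Ω, ℝ)) : Prop :=
  ∃ g ∈ A, (∃ g' ∈ A, g * g' = 1) ∧ ∀ x, f x = ‖g x‖

/-- `f ∈ Q̄`: `f` is a uniform limit on `Ω` of moduli of invertible elements of `A`. -/
def MemQbar (A : Subalgebra ℂ C(Ω, ℂ)) (f : C(Ω, ℝ)) : Prop :=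
  ∃ g : ℕ → C(Ω, ℂ), (∀ n, g n ∈ A ∧ ∃ g' ∈ A, g n * g' = 1) ∧
    TendstoUniformly (fun n x => ‖g n x‖) (fun x => f x) atTop

/-- `f ∈ 𝓜_A(Ω)`: there are sequences of `A`-tuples `Kₙ`, `Hₙ` with `Kₙ.Hₙ = 1`,
`‖Kₙ(w)‖₂ → f(w)` uniformly, and `‖Hₙ(w)‖₂ → f(w)⁻¹` uniformly on `Ω`. -/
def MemM (A : Subalgebra ℂ C(Ω, ℂ)) (f : C(Ω, ℝ)) : Prop :=
  ∃ (n : ℕ → ℕ) (K H : (m : ℕ) → Fin (n m) → C(Ω, ℂ)),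
    (∀ m i, K m i ∈ A) ∧ (∀ m i, H m i ∈ A) ∧
    (∀ m (x : Ω), (∑ i, K m i x * H m i x) = 1) ∧
    TendstoUniformly (fun m x => Real.sqrt (∑ i, ‖K m i x‖ ^ 2))
      (fun x => f x) atTop ∧
    TendstoUniformly (fun m x => Real.sqrt (∑ i, ‖H m i x‖ ^ 2))
      (fun x => (f x)⁻¹) atTop

/-- The set `𝓕` of finite sums `Σᵢ |gᵢ|²` with `gᵢ ∈ A`. -/
def calF (A : Subalgebra ℂ C(Ω, ℂ)) : Set C(Ω, ℝ) :=
  {u | ∃ (n : ℕ) (g : Fin n → C(Ω, ℂ)), (∀ i, g i ∈ A) ∧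
    ∀ x, u x = ∑ i, ‖g i x‖ ^ 2}

end Preamble

open ComplexConjugate

section OfReal

variable {Ω : Type*} [TopologicalSpace Ω]

@[simp]
lemma ofRealCM_apply (f : C(Ω, ℝ)) (x : Ω) : ofRealCM f x = f x := rfl

@[simp]
lemma ofRealCM_add (f g : C(Ω, ℝ)) : ofRealCM (f + g) = ofRealCM f + ofRealCM g := by
  ext; simp

@[simp]
lemma ofRealCM_sub (f g : C(Ω, ℝ)) : ofRealCM (f - g) = ofRealCM f - ofRealCM g := by
  ext; simp

@[simp]
lemma ofRealCM_const (c : ℝ) : ofRealCM (ContinuousMap.const Ω c) = (c : ℂ) • 1 := by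
  ext; simp

@[simp]
lemma star_ofRealCM (f : C(Ω, ℝ)) : star (ofRealCM f) = ofRealCM f := by
  ext; simp

lemma continuous_ofRealCM : Continuous (ofRealCM (Ω := Ω)) :=
  ContinuousMap.continuous_postcomp ⟨Complex.ofReal, Complex.continuous_ofReal⟩

lemma exists_eq_ofRealCM_add_I_smul (g : C(Ω, ℂ)) :
    ∃ p q : C(Ω, ℝ), g = ofRealCM p + Complex.I • ofRealCM q :=
  ⟨⟨fun x => (g x).re, by fun_prop⟩, ⟨fun x => (g x).im, by fun_prop⟩, by
    ext x; simp [mul_comm Complex.I]⟩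

lemma continuousLinearMap_ext_ofRealCM {M : Type*} [AddCommGroup M] [Module ℂ M]
    [TopologicalSpace M] {Θ Θ' : C(Ω, ℂ) →L[ℂ] M}
    (h : ∀ f, Θ (ofRealCM f) = Θ' (ofRealCM f)) : Θ = Θ' := by
  ext g
  obtain ⟨p, q, rfl⟩ := exists_eq_ofRealCM_add_I_smul g
  simp [h]

variable [CompactSpace Ω]

@[simp]
lemma norm_ofRealCM (f : C(Ω, ℝ)) : ‖ofRealCM f‖ = ‖f‖ := by
  simp [ContinuousMap.norm_eq_iSup_norm]

end OfReal

section States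

variable {Ω : Type*} [TopologicalSpace Ω] [CompactSpace Ω]

-- The norm form of the definition; positivity is `IsState.re_apply_ofRealCM_nonneg`.
def IsState (Θ : C(Ω, ℂ) →L[ℂ] ℂ) : Prop := ‖Θ‖ ≤ 1 ∧ Θ 1 = 1

namespace IsState

variable {Θ Φ Ψ : C(Ω, ℂ) →L[ℂ] ℂ}

lemma norm_apply_sub_le (hΘ : IsState Θ) (g : C(Ω, ℂ)) (c : ℂ) :
    ‖Θ g - c‖ ≤ ‖g - c • 1‖ :=
  calc ‖Θ g - c‖ = ‖Θ (g - c • 1)‖ := by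
        rw [map_sub, map_smul, hΘ.2, smul_eq_mul, mul_one]
    _ ≤ ‖Θ‖ * ‖g - c • 1‖ := Θ.le_opNorm _
    _ ≤ ‖g - c • 1‖ := mul_le_of_le_one_left (norm_nonneg _) hΘ.1

lemma im_apply_ofRealCM (hΘ : IsState Θ) (f : C(Ω, ℝ)) : (Θ (ofRealCM f)).im = 0 := by
  set z := Θ (ofRealCM f)
  have hdist (t : ℝ) : (z.im - t) ^ 2 ≤ ‖f‖ ^ 2 + t ^ 2 := by
    have hsup : ‖ofRealCM f - (t * Complex.I) • 1‖ ≤ √(‖f‖ ^ 2 + t ^ 2) := by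
      refine (ContinuousMap.norm_le _ (Real.sqrt_nonneg _)).2 fun x => ?_
      have hx : (ofRealCM f - (t * Complex.I) • 1) x = f x + ((-t : ℝ) : ℂ) * Complex.I := by
        simp [sub_eq_add_neg]
      have hfx : f x ^ 2 ≤ ‖f‖ ^ 2 := by
        simpa [sq_abs] using pow_le_pow_left₀ (norm_nonneg _) (f.norm_coe_le_norm x) 2
      rw [hx, Complex.norm_add_mul_I, neg_sq]
      exact Real.sqrt_le_sqrt (by linarith)
    have hz : (z.im - t) ^ 2 ≤ ‖z - t * Complex.I‖ ^ 2 := by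
      rw [Complex.sq_norm, Complex.normSq_apply]
      simp only [Complex.sub_re, Complex.sub_im, Complex.mul_re, Complex.mul_im, Complex.ofReal_re,
        Complex.ofReal_im, Complex.I_re, Complex.I_im]
      nlinarith [mul_self_nonneg z.re]
    calc (z.im - t) ^ 2 ≤ ‖z - t * Complex.I‖ ^ 2 := hz
      _ ≤ √(‖f‖ ^ 2 + t ^ 2) ^ 2 := by gcongr; exact (hΘ.norm_apply_sub_le _ _).trans hsup
      _ = ‖f‖ ^ 2 + t ^ 2 := Real.sq_sqrt (by positivity)
  by_contra him
  set t := -(‖f‖ ^ 2 + 1) / (2 * z.im)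
  have ht : 2 * t * z.im = -(‖f‖ ^ 2 + 1) := by simp only [t]; field_simp
  nlinarith [hdist t, sq_nonneg z.im]

lemma re_apply_ofRealCM_nonneg (hΘ : IsState Θ) {f : C(Ω, ℝ)} (hf : 0 ≤ f) :
    0 ≤ (Θ (ofRealCM f)).re := by
  set c := ‖f‖ / 2 with hc
  have hsup : ‖f - ContinuousMap.const Ω c‖ ≤ c := by
    refine (ContinuousMap.norm_le _ (by positivity)).2 fun x => ?_
    have h0 : 0 ≤ f x := by simpa using ContinuousMap.le_def.1 hf x
    have h1 := (abs_le.1 (Real.norm_eq_abs _ ▸ f.norm_coe_le_norm x)).2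
    simp only [ContinuousMap.sub_apply, ContinuousMap.const_apply, Real.norm_eq_abs, abs_le]
    constructor <;> linarith
  have hdist : ‖Θ (ofRealCM f) - c‖ ≤ c :=
    calc ‖Θ (ofRealCM f) - c‖ ≤ ‖ofRealCM f - (c : ℂ) • 1‖ := hΘ.norm_apply_sub_le _ _
      _ = ‖f - ContinuousMap.const Ω c‖ := by
        rw [← norm_ofRealCM, ofRealCM_sub, ofRealCM_const]
      _ ≤ c := hsup
  have := (Complex.abs_re_le_norm _).trans hdist
  simp only [Complex.sub_re, Complex.ofReal_re, abs_le] at this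
  linarith

lemma map_star (hΘ : IsState Θ) (g : C(Ω, ℂ)) : Θ (star g) = conj (Θ g) := by
  obtain ⟨p, q, rfl⟩ := exists_eq_ofRealCM_add_I_smul g
  apply Complex.ext <;>
    simp [hΘ.im_apply_ofRealCM]

lemma sq_norm_apply_le (hΘ : IsState Θ) (g : C(Ω, ℂ)) :
    ‖Θ g‖ ^ 2 ≤ (Θ (g * star g)).re := by
  set F : C(Ω, ℝ) := ⟨fun x => ‖g x - Θ g‖ ^ 2, by fun_prop⟩
  have hF : ofRealCM F =
      g * star g - conj (Θ g) • g - Θ g • star g + (‖Θ g‖ ^ 2 : ℂ) • 1 := by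
    ext x
    simp only [F, ofRealCM_apply, ContinuousMap.coe_mk, ContinuousMap.add_apply,
      ContinuousMap.sub_apply, ContinuousMap.smul_apply, ContinuousMap.mul_apply,
      ContinuousMap.star_apply, ContinuousMap.one_apply, smul_eq_mul, mul_one, Complex.star_def]
    push_cast
    rw [← Complex.conj_mul', ← Complex.conj_mul', map_sub]
    ring
  have hpos :=
    hΘ.re_apply_ofRealCM_nonneg (f := F) (ContinuousMap.le_def.2 fun _ => sq_nonneg _)
  rw [hF, map_add, map_sub, map_sub, map_smul, map_smul, map_smul, hΘ.2, hΘ.map_star] at hpos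
  rw [smul_eq_mul, smul_eq_mul, Complex.conj_mul', Complex.mul_conj'] at hpos
  simp only [smul_eq_mul, mul_one, Complex.add_re, Complex.sub_re] at hpos
  norm_cast at hpos
  linarith

lemma smul_add_smul (hΦ : IsState Φ) (hΨ : IsState Ψ) {a b : ℝ} (ha : 0 ≤ a) (hb : 0 ≤ b)
    (hab : a + b = 1) : IsState (a • Φ + b • Ψ) := by
  refine ⟨?_, ?_⟩
  · calc ‖a • Φ + b • Ψ‖ ≤ a * ‖Φ‖ + b * ‖Ψ‖ := by
          refine (norm_add_le _ _).trans ?_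
          simpa only [Real.norm_of_nonneg ha, Real.norm_of_nonneg hb] using
            add_le_add (norm_smul_le a Φ) (norm_smul_le b Ψ)
      _ ≤ a * 1 + b * 1 := by gcongr; exacts [hΦ.1, hΨ.1]
      _ = 1 := by rw [mul_one, mul_one, hab]
  · simp only [add_apply, smul_apply, hΦ.2, hΨ.2, Complex.real_smul, mul_one]
    exact_mod_cast hab

/-- Point evaluations are extreme points of the set of states. -/
lemma eq_evalCLM_of_smul_add_smul (hΦ : IsState Φ) (hΨ : IsState Ψ) {a b : ℝ} (ha : 0 < a)
    (hb : 0 ≤ b) {x₀ : Ω} (h : a • Φ + b • Ψ = ContinuousMap.evalCLM ℂ x₀) :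
    Φ = ContinuousMap.evalCLM ℂ x₀ := by
  have hvanish {p : C(Ω, ℝ)} (hp : 0 ≤ p) (hp₀ : p x₀ = 0) : Φ (ofRealCM p) = 0 := by
    have hre := congrArg Complex.re (congrArg (· (ofRealCM p)) h)
    simp only [add_apply, smul_apply, Complex.real_smul, Complex.add_re, Complex.mul_re,
      Complex.ofReal_re, Complex.ofReal_im, zero_mul, sub_zero, ContinuousMap.evalCLM_apply,
      ofRealCM_apply, hp₀, Complex.ofReal_zero, Complex.zero_re] at hre
    have hΦp := hΦ.re_apply_ofRealCM_nonneg hp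
    have hΨp := hΨ.re_apply_ofRealCM_nonneg hp
    refine Complex.ext ?_ (hΦ.im_apply_ofRealCM p)
    rw [Complex.zero_re]
    nlinarith [mul_nonneg hb hΨp]
  refine continuousLinearMap_ext_ofRealCM fun f => ?_
  set d := f - ContinuousMap.const Ω (f x₀)
  have hd₀ : d x₀ = 0 := sub_self _
  have hf : ofRealCM f = ofRealCM d⁺ - ofRealCM d⁻ + (f x₀ : ℂ) • 1 := by
    rw [← ofRealCM_sub, ← ofRealCM_const, ← ofRealCM_add, posPart_sub_negPart, sub_add_cancel]
  have hpos₀ : d⁺ x₀ = 0 := show (d x₀)⁺ = 0 by simp [hd₀]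
  have hneg₀ : d⁻ x₀ = 0 := show (d x₀)⁻ = 0 by simp [hd₀]
  rw [hf, map_add, map_sub, hvanish (posPart_nonneg d) hpos₀, hvanish (negPart_nonneg d) hneg₀,
    map_smul, hΦ.2]
  simp [hpos₀, hneg₀]

lemma exists_re_apply_ofRealCM_lt (hΘ : IsState Θ) {x₀ : Ω}
    (hne : Θ ≠ ContinuousMap.evalCLM ℂ x₀) : ∃ h : C(Ω, ℝ), (Θ (ofRealCM h)).re < h x₀ := by
  by_contra! hge
  refine hne (continuousLinearMap_ext_ofRealCM fun f => ?_)
  have hle := hge (-f)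
  have : ofRealCM (-f) = -ofRealCM f := by ext; simp
  simp only [this, map_neg, Complex.neg_re, ContinuousMap.neg_apply, neg_le_neg_iff] at hle
  exact Complex.ext (le_antisymm hle (hge f)) (hΘ.im_apply_ofRealCM f)

lemma exists_nonneg_notMem_closure (hΘ : IsState Θ) {x₀ : Ω}
    (hne : Θ ≠ ContinuousMap.evalCLM ℂ x₀) {S : Set C(Ω, ℝ)}
    (hS : ∀ u ∈ S, u x₀ ≤ (Θ (ofRealCM u)).re) :
    ∃ f : C(Ω, ℝ), (∀ x, 0 ≤ f x) ∧ f ∉ closure S := by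
  obtain ⟨h, hlt⟩ := hΘ.exists_re_apply_ofRealCM_lt hne
  have hclosed : IsClosed {u : C(Ω, ℝ) | u x₀ ≤ (Θ (ofRealCM u)).re} :=
    isClosed_le (continuous_eval_const x₀)
      (Complex.continuous_re.comp (Θ.continuous.comp continuous_ofRealCM))
  refine ⟨h + ContinuousMap.const Ω ‖h‖, fun x => ?_, fun hf => ?_⟩
  · have := (abs_le.1 (Real.norm_eq_abs _ ▸ h.norm_coe_le_norm x)).1
    simp only [ContinuousMap.add_apply, ContinuousMap.const_apply]
    linarith
  · have : (h + ContinuousMap.const Ω ‖h‖) x₀ ≤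
        (Θ (ofRealCM (h + ContinuousMap.const Ω ‖h‖))).re :=
      closure_minimal hS hclosed hf
    simp only [ContinuousMap.add_apply, ContinuousMap.const_apply, ofRealCM_add, ofRealCM_const,
      map_add, map_smul, hΘ.2, smul_eq_mul, mul_one, Complex.add_re, Complex.ofReal_re,
      add_le_add_iff_right] at this
    linarith

lemma apply_le_re_of_mem_calF (hΘ : IsState Θ) {A : Subalgebra ℂ C(Ω, ℂ)} {x₀ : Ω}
    (hA : ∀ g ∈ A, Θ g = g x₀) {u : C(Ω, ℝ)} (hu : u ∈ calF A) :
    u x₀ ≤ (Θ (ofRealCM u)).re := by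
  obtain ⟨n, g, hgA, hu⟩ := hu
  have hsum : ofRealCM u = ∑ i, g i * star (g i) := by
    ext x
    simp [hu x, Complex.mul_conj']
  calc u x₀ = ∑ i, ‖Θ (g i)‖ ^ 2 := by simp [hu x₀, hA _ (hgA _)]
    _ ≤ ∑ i, (Θ (g i * star (g i))).re := Finset.sum_le_sum fun i _ => hΘ.sq_norm_apply_le _
    _ = (Θ (ofRealCM u)).re := by rw [hsum, map_sum, Complex.re_sum]

end IsState

end States

lemma exists_isState_ne_evalCLM_of_not_inChoquet {Ω : Type*} [TopologicalSpace Ω]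
    [CompactSpace Ω] {M : Submodule ℂ C(Ω, ℂ)} (hM : (1 : C(Ω, ℂ)) ∈ M) {x₀ : Ω}
    (hx₀ : ¬ InChoquet M x₀) :
    ∃ L : C(Ω, ℂ) →L[ℂ] ℂ, IsState L ∧ (∀ g ∈ M, L g = g x₀) ∧
      L ≠ ContinuousMap.evalCLM ℂ x₀ := by
  have he : evalFunctional M x₀ ∈ Metric.closedBall (0 : M →L[ℂ] ℂ) 1 :=
    Metric.mem_closedBall.2 <|
      (dist_zero_right (evalFunctional M x₀)).trans_le
        (LinearMap.mkContinuous_norm_le _ zero_le_one _)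
  simp only [InChoquet, mem_extremePoints, he, true_and, not_forall] at hx₀
  obtain ⟨φ, hφ, ψ, hψ, ⟨a, b, ha, hb, hab, hφψ⟩, hne⟩ := hx₀
  replace hφ : ‖φ‖ ≤ 1 := dist_zero_right φ ▸ hφ
  replace hψ : ‖ψ‖ ≤ 1 := dist_zero_right ψ ▸ hψ
  have happly (v : M) : a • φ v + b • ψ v = (v : C(Ω, ℂ)) x₀ := congr($hφψ v)
  set one : M := ⟨1, hM⟩
  have hone : ‖one‖ ≤ 1 := (ContinuousMap.norm_le _ zero_le_one).2 fun _ => by simp [one]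
  have hφ₁ : ‖φ one‖ ≤ 1 := (φ.le_opNorm one).trans (mul_le_one₀ hφ (norm_nonneg _) hone)
  have hψ₁ : ‖ψ one‖ ≤ 1 := (ψ.le_opNorm one).trans (mul_le_one₀ hψ (norm_nonneg _) hone)
  -- `a • φ 1 + b • ψ 1 = 1` lies on the boundary of the strictly convex unit disc
  have hφψ₁ : φ one = ψ one := by
    by_contra h
    have := norm_combo_lt_of_ne hφ₁ hψ₁ h ha hb hab
    rw [happly] at this
    simp [one] at this
  have hφ1 : φ one = 1 := by
    have := happly one
    rw [← hφψ₁, ← add_smul, hab, one_smul] at this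
    simpa [one] using this
  obtain ⟨Φ, hΦφ, hΦnorm⟩ := exists_extension_norm_eq M φ
  obtain ⟨Ψ, hΨψ, hΨnorm⟩ := exists_extension_norm_eq M ψ
  have hΦ : IsState Φ := ⟨hΦnorm ▸ hφ, (hΦφ one).trans hφ1⟩
  have hΨ : IsState Ψ := ⟨hΨnorm ▸ hψ, (hΨψ one).trans (hφψ₁ ▸ hφ1)⟩
  refine ⟨a • Φ + b • Ψ, hΦ.smul_add_smul hΨ ha.le hb.le hab, fun g hg => ?_,
    fun hL => hne ⟨?_, ?_⟩⟩
  · simpa [hΦφ ⟨g, hg⟩, hΨψ ⟨g, hg⟩] using happly ⟨g, hg⟩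
  · ext v
    rw [← hΦφ, hΦ.eq_evalCLM_of_smul_add_smul hΨ ha hb.le hL]
    rfl
  · ext v
    rw [← hΨψ, hΨ.eq_evalCLM_of_smul_add_smul hΦ hb ha.le ((add_comm _ _).trans hL)]
    rfl

theorem stmt_12_general {Ω : Type*} [TopologicalSpace Ω] [CompactSpace Ω]
    (A : Subalgebra ℂ C(Ω, ℂ))
    (hproper : {x : Ω | InChoquet (Subalgebra.toSubmodule A) x} ≠ Set.univ) :
    ∃ f : C(Ω, ℝ), (∀ x, 0 ≤ f x) ∧ f ∉ closure (calF A) := by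
  obtain ⟨x₀, hx₀⟩ := (Set.ne_univ_iff_exists_notMem _).1 hproper
  obtain ⟨L, hL, hLA, hne⟩ :=
    exists_isState_ne_evalCLM_of_not_inChoquet (M := Subalgebra.toSubmodule A) A.one_mem hx₀
  exact hL.exists_nonneg_notMem_closure hne fun u hu => hL.apply_le_re_of_mem_calF hLA hu

theorem stmt_12 {Ω : Type*} [TopologicalSpace Ω] [CompactSpace Ω] [T2Space Ω]
    (A : Subalgebra ℂ C(Ω, ℂ))
    (hclosed : IsClosed (A : Set C(Ω, ℂ)))
    (hsep : ∀ x y : Ω, x ≠ y → ∃ a ∈ A, a x ≠ a y)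
    (hshilov : Dense {x : Ω | InChoquet (Subalgebra.toSubmodule A) x})
    (hproper : {x : Ω | InChoquet (Subalgebra.toSubmodule A) x} ≠ Set.univ) :
    ∃ f : C(Ω, ℝ), (∀ x, 0 ≤ f x) ∧ f ∉ closure (calF A) :=
  stmt_12_general A hproper
end

section
/- Let A be a uniform algebra on a compact Hausdorff space Ω and let f ∈ C(Ω,ℝ) be strictly positive. Then f ∈ 𝓜_A(Ω) if and only if there exist a sequence of positive integers nₘ and sequences of A-tuples Hₘ, Kₘ ∈ A^{nₘ} such that, uniformly over w ∈ Ω: (i) ‖Kₘ(w)‖₂ → f(w); (ii) ‖Hₘ(w)‖₂ → f(w)⁻¹; and (iii) ‖Kₘ(w) − Hₘ(w)*·f(w)²‖₂ → 0, where Hₘ(w)* denotes the entrywise complex conjugate of the vector Hₘ(w). -/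
open Filter

/-! Pointwise, `‖K - conj(H) f²‖² = ‖K‖² + f⁴‖H‖² - 2f² Re(K·H)`, so when `K·H = 1` the defect
tends to `f² + f⁴f⁻² - 2f² = 0`. Conversely `K·H - 1 = (K - conj(H) f²)·H + (f²‖H‖² - 1)`, so by
Cauchy–Schwarz a vanishing defect forces `K·H → 1` uniformly. As `A` is closed, `K·H` is then
eventually invertible in `A` with inverses `q → 1`, and the tuples `q K`, `H` witness
`f ∈ 𝓜_A(Ω)`. -/

open Filter Topology ComplexConjugate

theorem SubringClass.exists_tendsto_mul_eq_one {E S ι : Type*} [NormedRing E] [CompleteSpace E]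
    [SetLike S E] [SubringClass S E] {s : S} (hs : IsClosed (s : Set E)) {l : Filter ι}
    {g : ι → E} (hgs : ∀ i, g i ∈ s) (hg : Tendsto g l (𝓝 1)) :
    ∃ q : ι → E, (∀ i, q i ∈ s) ∧ (∀ᶠ i in l, q i * g i = 1) ∧ Tendsto q l (𝓝 1) := by
  have : CompleteSpace s := hs.isComplete.completeSpace_coe
  let G : ι → s := fun i => ⟨g i, hgs i⟩
  have hG : Tendsto G l (𝓝 1) := tendsto_subtype_rng.2 hg
  refine ⟨fun i => (Ring.inverse (G i) : s), fun i => (Ring.inverse (G i)).2, ?_, ?_⟩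
  · filter_upwards [hG.eventually (Units.isOpen.mem_nhds isUnit_one)] with i hi
    exact congrArg Subtype.val (Ring.inverse_mul_cancel _ hi)
  · have := (NormedRing.inverse_continuousAt (1 : sˣ)).tendsto.comp hG
    rw [Units.val_one, Ring.inverse_one] at this
    exact tendsto_subtype_rng.1 this

theorem Complex.norm_sum_mul_le {n : ℕ} (a b : Fin n → ℂ) :
    ‖∑ i, a i * b i‖ ≤ √(∑ i, ‖a i‖ ^ 2) * √(∑ i, ‖b i‖ ^ 2) :=
  calc ‖∑ i, a i * b i‖ ≤ ∑ i, ‖a i‖ * ‖b i‖ := by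
        simpa only [norm_mul] using norm_sum_le Finset.univ fun i => a i * b i
    _ ≤ _ := Real.sum_mul_le_sqrt_mul_sqrt _ _ _

theorem Complex.sq_norm_sub_mul_conj (k h : ℂ) (t : ℝ) :
    ‖k - conj h * t‖ ^ 2 = ‖k‖ ^ 2 + t ^ 2 * ‖h‖ ^ 2 - 2 * t * (k * h).re := by
  simp only [Complex.sq_norm, Complex.normSq_apply, Complex.sub_re, Complex.sub_im,
    Complex.mul_re, Complex.mul_im, Complex.conj_re, Complex.conj_im, Complex.ofReal_re,
    Complex.ofReal_im]
  ring

section TupleNorm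

variable {Ω : Type*} [TopologicalSpace Ω] {n : ℕ}

noncomputable def tupleNorm (v : Fin n → C(Ω, ℂ)) : C(Ω, ℝ) :=
  ⟨fun x => √(∑ i, ‖v i x‖ ^ 2), by fun_prop⟩

noncomputable def conjDefect (w : C(Ω, ℝ)) (K H : Fin n → C(Ω, ℂ)) : Fin n → C(Ω, ℂ) :=
  fun i => K i - star (H i) * ofRealCM w

@[simp]
theorem tupleNorm_apply (v : Fin n → C(Ω, ℂ)) (x : Ω) :
    tupleNorm v x = √(∑ i, ‖v i x‖ ^ 2) := rfl

theorem sq_tupleNorm_apply (v : Fin n → C(Ω, ℂ)) (x : Ω) :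
    tupleNorm v x ^ 2 = ∑ i, ‖v i x‖ ^ 2 :=
  Real.sq_sqrt (by positivity)

theorem conjDefect_apply (w : C(Ω, ℝ)) (K H : Fin n → C(Ω, ℂ)) (i : Fin n) (x : Ω) :
    conjDefect w K H i x = K i x - conj (H i x) * w x := rfl

theorem sq_tupleNorm_conjDefect_apply (w : C(Ω, ℝ)) (K H : Fin n → C(Ω, ℂ)) (x : Ω) :
    tupleNorm (conjDefect w K H) x ^ 2 =
      tupleNorm K x ^ 2 + w x ^ 2 * tupleNorm H x ^ 2 - 2 * w x * (∑ i, K i x * H i x).re := by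
  simp only [sq_tupleNorm_apply, conjDefect_apply, Complex.sq_norm_sub_mul_conj,
    Finset.sum_add_distrib, Finset.sum_sub_distrib, ← Finset.mul_sum, Complex.re_sum]

theorem sq_tupleNorm_conjDefect {w : C(Ω, ℝ)} {K H : Fin n → C(Ω, ℂ)}
    (hKH : ∀ x, ∑ i, K i x * H i x = 1) :
    tupleNorm (conjDefect w K H) ^ 2 = tupleNorm K ^ 2 + w ^ 2 * tupleNorm H ^ 2 - 2 * w := by
  ext x
  have h2 : (2 : C(Ω, ℝ)) x = 2 := ContinuousMap.natCast_apply 2 x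
  simp only [ContinuousMap.sub_apply, ContinuousMap.add_apply, ContinuousMap.mul_apply,
    ContinuousMap.pow_apply, h2, sq_tupleNorm_conjDefect_apply, hKH, Complex.one_re, mul_one]

theorem norm_sum_mul_sub_one_le_apply (w : C(Ω, ℝ)) (K H : Fin n → C(Ω, ℂ)) (x : Ω) :
    ‖∑ i, K i x * H i x - 1‖ ≤
      tupleNorm (conjDefect w K H) x * tupleNorm H x + |w x * tupleNorm H x ^ 2 - 1| := by
  have hsplit : ∑ i, K i x * H i x - 1 =
      ∑ i, conjDefect w K H i x * H i x + ((w x * tupleNorm H x ^ 2 - 1 : ℝ) : ℂ) := by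
    have hterm : ∀ i, conjDefect w K H i x * H i x = K i x * H i x - w x * ‖H i x‖ ^ 2 := by
      intro i
      rw [conjDefect_apply, ← Complex.conj_mul']
      ring
    simp only [hterm, Finset.sum_sub_distrib, sq_tupleNorm_apply, Finset.mul_sum]
    push_cast
    ring
  calc ‖∑ i, K i x * H i x - 1‖
      ≤ ‖∑ i, conjDefect w K H i x * H i x‖ + ‖((w x * tupleNorm H x ^ 2 - 1 : ℝ) : ℂ)‖ := by
        rw [hsplit]; exact norm_add_le _ _
    _ ≤ _ := by
        rw [Complex.norm_real, Real.norm_eq_abs]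
        gcongr
        exact Complex.norm_sum_mul_le _ _

theorem tupleNorm_mul_left (q : C(Ω, ℂ)) (K : Fin n → C(Ω, ℂ)) :
    tupleNorm (fun i => q * K i) =
      (ContinuousMap.mk (‖·‖) continuous_norm).comp q * tupleNorm K := by
  ext x
  simp [mul_pow, ← Finset.mul_sum, Real.sqrt_mul (sq_nonneg _), Real.sqrt_sq (norm_nonneg _)]

theorem norm_sum_mul_sub_one_le [CompactSpace Ω] (w : C(Ω, ℝ)) (K H : Fin n → C(Ω, ℂ)) :
    ‖∑ i, K i * H i - 1‖ ≤
      ‖tupleNorm (conjDefect w K H)‖ * ‖tupleNorm H‖ + ‖w * tupleNorm H ^ 2 - 1‖ := by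
  have hle : ∀ (u : C(Ω, ℝ)) x, |u x| ≤ ‖u‖ := fun u x => by
    simpa only [Real.norm_eq_abs] using u.norm_coe_le_norm x
  refine (ContinuousMap.norm_le _ (by positivity)).2 fun x => ?_
  calc ‖(∑ i, K i * H i - 1) x‖ = ‖∑ i, K i x * H i x - 1‖ := by simp
    _ ≤ tupleNorm (conjDefect w K H) x * tupleNorm H x +
          |(w * tupleNorm H ^ 2 - 1 : C(Ω, ℝ)) x| := by
        simpa using norm_sum_mul_sub_one_le_apply w K H x
    _ ≤ _ :=
        add_le_add (mul_le_mul ((le_abs_self _).trans (hle _ x))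
          ((le_abs_self _).trans (hle _ x)) (Real.sqrt_nonneg _) (norm_nonneg _)) (hle _ x)

end TupleNorm

theorem tendsto_zero_of_tendsto_mul_self_zero {E ι : Type*} [NonUnitalNormedRing E] [StarRing E]
    [CStarRing E] [TrivialStar E] {l : Filter ι} {u : ι → E}
    (h : Tendsto (fun j => u j * u j) l (𝓝 0)) : Tendsto u l (𝓝 0) := by
  rw [tendsto_zero_iff_norm_tendsto_zero] at h ⊢
  simp_rw [(IsSelfAdjoint.all _).norm_mul_self] at h
  simpa using h.sqrt

section Limits

variable {Ω ι : Type*} [TopologicalSpace Ω] [CompactSpace Ω] {l : Filter ι} {n : ι → ℕ}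
  {K H : (j : ι) → Fin (n j) → C(Ω, ℂ)} {f g : C(Ω, ℝ)}

theorem tendstoUniformly_tupleNorm_iff {φ : Ω → ℝ} (hφ : ∀ x, f x = φ x) :
    TendstoUniformly (fun j x => √(∑ i, ‖K j i x‖ ^ 2)) φ l ↔
      Tendsto (fun j => tupleNorm (K j)) l (𝓝 f) := by
  rw [ContinuousMap.tendsto_iff_tendstoUniformly, ← funext hφ]
  rfl

theorem tendstoUniformly_conjDefect_iff :
    TendstoUniformly
        (fun j x => √(∑ i, ‖K j i x - conj (H j i x) * (f x : ℂ) ^ 2‖ ^ 2)) (fun _ => 0) l ↔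
      Tendsto (fun j => tupleNorm (conjDefect (f ^ 2) (K j) (H j))) l (𝓝 0) := by
  rw [ContinuousMap.tendsto_iff_tendstoUniformly]
  simp only [conjDefect_apply, tupleNorm_apply, ContinuousMap.pow_apply, Complex.ofReal_pow,
    ContinuousMap.coe_zero]
  rfl

theorem tendsto_tupleNorm_conjDefect (hfg : f * g = 1)
    (hKH : ∀ j x, ∑ i, K j i x * H j i x = 1)
    (hK : Tendsto (fun j => tupleNorm (K j)) l (𝓝 f))
    (hH : Tendsto (fun j => tupleNorm (H j)) l (𝓝 g)) :
    Tendsto (fun j => tupleNorm (conjDefect (f ^ 2) (K j) (H j))) l (𝓝 0) := by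
  refine tendsto_zero_of_tendsto_mul_self_zero ?_
  have hlim := ((hK.pow 2).add ((tendsto_const_nhds (x := (f ^ 2) ^ 2)).mul (hH.pow 2))).sub
    (tendsto_const_nhds (x := 2 * f ^ 2))
  rw [show f ^ 2 + (f ^ 2) ^ 2 * g ^ 2 - 2 * f ^ 2 = 0 by
    linear_combination (f ^ 2 * (f * g + 1)) * hfg] at hlim
  exact hlim.congr fun j => by rw [← sq, sq_tupleNorm_conjDefect (hKH j)]

theorem tendsto_sum_mul_of_tendsto_conjDefect (hfg : f * g = 1)
    (hH : Tendsto (fun j => tupleNorm (H j)) l (𝓝 g))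
    (hD : Tendsto (fun j => tupleNorm (conjDefect (f ^ 2) (K j) (H j))) l (𝓝 0)) :
    Tendsto (fun j => ∑ i, K j i * H j i) l (𝓝 1) := by
  have hbound := (hD.norm.mul hH.norm).add
    (((tendsto_const_nhds (x := f ^ 2)).mul (hH.pow 2)).sub (tendsto_const_nhds (x := 1))).norm
  rw [show f ^ 2 * g ^ 2 - 1 = 0 by linear_combination (f * g + 1) * hfg, norm_zero,
    zero_mul, add_zero] at hbound
  rw [tendsto_iff_norm_sub_tendsto_zero]
  exact squeeze_zero (fun j => norm_nonneg _) (fun j => norm_sum_mul_sub_one_le _ _ _) hbound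

theorem tendsto_tupleNorm_mul_left {q : ι → C(Ω, ℂ)} (hq : Tendsto q l (𝓝 1))
    (hK : Tendsto (fun j => tupleNorm (K j)) l (𝓝 f)) :
    Tendsto (fun j => tupleNorm (fun i => q j * K j i)) l (𝓝 f) := by
  have hnorm := ((ContinuousMap.continuous_postcomp
    (ContinuousMap.mk (‖·‖) continuous_norm)).tendsto 1).comp hq
  rw [show (ContinuousMap.mk (‖·‖) continuous_norm).comp (1 : C(Ω, ℂ)) = 1 by ext; simp] at hnorm
  simpa only [tupleNorm_mul_left, one_mul, Function.comp_apply] using hnorm.mul hK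

end Limits

theorem memM_of_eventually_sum_mul_eq_one {Ω : Type*} [TopologicalSpace Ω] [CompactSpace Ω]
    {A : Subalgebra ℂ C(Ω, ℂ)} {f g : C(Ω, ℝ)} (hg : ∀ x, g x = (f x)⁻¹) {n : ℕ → ℕ}
    {K H : (m : ℕ) → Fin (n m) → C(Ω, ℂ)} (hK : ∀ m i, K m i ∈ A) (hH : ∀ m i, H m i ∈ A)
    (hKH : ∀ᶠ m in atTop, ∑ i, K m i * H m i = 1)
    (hKf : Tendsto (fun m => tupleNorm (K m)) atTop (𝓝 f))
    (hHg : Tendsto (fun m => tupleNorm (H m)) atTop (𝓝 g)) :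
    MemM A f := by
  obtain ⟨M, hM⟩ := eventually_atTop.1 hKH
  have hshift := tendsto_add_atTop_nat M
  exact ⟨fun m => n (m + M), fun m => K (m + M), fun m => H (m + M), fun m => hK _,
    fun m => hH _, fun m x => by simpa using DFunLike.congr_fun (hM _ (Nat.le_add_left M m)) x,
    (tendstoUniformly_tupleNorm_iff fun _ => rfl).2 (hKf.comp hshift),
    (tendstoUniformly_tupleNorm_iff hg).2 (hHg.comp hshift)⟩

theorem stmt_18_general {Ω : Type*} [TopologicalSpace Ω] [CompactSpace Ω]
    (A : Subalgebra ℂ C(Ω, ℂ))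
    (hclosed : IsClosed (A : Set C(Ω, ℂ)))
    (f : C(Ω, ℝ)) (hf : ∀ x, 0 < f x) :
    MemM A f ↔
      ∃ (n : ℕ → ℕ) (H K : (m : ℕ) → Fin (n m) → C(Ω, ℂ)),
        (∀ m i, H m i ∈ A) ∧ (∀ m i, K m i ∈ A) ∧
        TendstoUniformly (fun m x => Real.sqrt (∑ i, ‖K m i x‖ ^ 2))
          (fun x => f x) atTop ∧
        TendstoUniformly (fun m x => Real.sqrt (∑ i, ‖H m i x‖ ^ 2))
          (fun x => (f x)⁻¹) atTop ∧
        TendstoUniformly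
          (fun m x => Real.sqrt
            (∑ i, ‖K m i x - (starRingEnd ℂ) (H m i x) * (f x : ℂ) ^ 2‖ ^ 2))
          (fun _ => 0) atTop := by
  obtain ⟨g, hfg⟩ : ∃ g, f * g = 1 :=
    ((ContinuousMap.isUnit_iff_forall_ne_zero f).2 fun x => (hf x).ne').exists_right_inv
  have hg : ∀ x, g x = (f x)⁻¹ := fun x => eq_inv_of_mul_eq_one_right (DFunLike.congr_fun hfg x)
  constructor
  · rintro ⟨n, K, H, hK, hH, hKH, hKf, hHg⟩
    refine ⟨n, H, K, hH, hK, hKf, hHg, tendstoUniformly_conjDefect_iff.2 ?_⟩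
    exact tendsto_tupleNorm_conjDefect hfg hKH
      ((tendstoUniformly_tupleNorm_iff fun _ => rfl).1 hKf)
      ((tendstoUniformly_tupleNorm_iff hg).1 hHg)
  · rintro ⟨n, H, K, hH, hK, hKf, hHg, hD⟩
    replace hKf := (tendstoUniformly_tupleNorm_iff fun _ => rfl).1 hKf
    replace hHg := (tendstoUniformly_tupleNorm_iff hg).1 hHg
    obtain ⟨q, hqA, hqKH, hq⟩ := SubringClass.exists_tendsto_mul_eq_one hclosed
      (fun m => sum_mem fun i _ => A.mul_mem (hK m i) (hH m i))
      (tendsto_sum_mul_of_tendsto_conjDefect hfg hHg (tendstoUniformly_conjDefect_iff.1 hD))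
    refine memM_of_eventually_sum_mul_eq_one (K := fun m i => q m * K m i) hg
      (fun m i => A.mul_mem (hqA m) (hK m i)) hH ?_ ?_ hHg
    · filter_upwards [hqKH] with m hm
      simpa only [mul_assoc, ← Finset.mul_sum] using hm
    · exact tendsto_tupleNorm_mul_left hq hKf

theorem stmt_18 {Ω : Type*} [TopologicalSpace Ω] [CompactSpace Ω] [T2Space Ω]
    (A : Subalgebra ℂ C(Ω, ℂ))
    (hclosed : IsClosed (A : Set C(Ω, ℂ)))
    (hsep : ∀ x y : Ω, x ≠ y → ∃ a ∈ A, a x ≠ a y)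
    (f : C(Ω, ℝ)) (hf : ∀ x, 0 < f x) :
    MemM A f ↔
      ∃ (n : ℕ → ℕ) (H K : (m : ℕ) → Fin (n m) → C(Ω, ℂ)),
        (∀ m i, H m i ∈ A) ∧ (∀ m i, K m i ∈ A) ∧
        TendstoUniformly (fun m x => Real.sqrt (∑ i, ‖K m i x‖ ^ 2))
          (fun x => f x) atTop ∧
        TendstoUniformly (fun m x => Real.sqrt (∑ i, ‖H m i x‖ ^ 2))
          (fun x => (f x)⁻¹) atTop ∧
        TendstoUniformly
          (fun m x => Real.sqrt
            (∑ i, ‖K m i x - (starRingEnd ℂ) (H m i x) * (f x : ℂ) ^ 2‖ ^ 2))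
          (fun _ => 0) atTop :=
  stmt_18_general A hclosed f hf
end
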